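/- For every monotone E3CNF formula φ with n variables and m clauses, the minimum number of tuples whose deletion from I_φ leaves an instance consistent with respect to {A → B, C → B} equals 3m − #τ_max(φ); that is, opt(I_φ) = 3m − #τ_max(φ). -/

import Mathlib

/-- A functional dependency `X → Y` is a pair of attribute sets; two tuples form a
`φ`-conflict if they agree on every attribute of `X` but differ on some attribute of `Y`. -/
def IsPhiConflict {α V : Type*} (X Y : Finset α) (s t : α → V) : Prop :=
  (∀ a ∈ X, s a = t a) ∧ (∃ a ∈ Y, s a ≠ t a)

instance {α V : Type*} [DecidableEq V] (X Y : Finset α) (s t : α → V) :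
    Decidable (IsPhiConflict X Y s t) := by
  unfold IsPhiConflict; infer_instance

/-- Two tuples form a conflict w.r.t. a finite FD set if they form a `φ`-conflict
for some FD `φ` of the set. -/
def IsConflict {α V : Type*} (FDs : Finset (Finset α × Finset α)) (s t : α → V) : Prop :=
  ∃ fd ∈ FDs, IsPhiConflict fd.1 fd.2 s t

instance {α V : Type*} [DecidableEq V] (FDs : Finset (Finset α × Finset α)) (s t : α → V) :
    Decidable (IsConflict FDs s t) := by
  unfold IsConflict; infer_instance

/-- A set of tuples is consistent w.r.t. an FD set if no two of its tuples form a conflict. -/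
def Consistent {α V : Type*} (FDs : Finset (Finset α × Finset α)) (J : Finset (α → V)) : Prop :=
  ∀ s ∈ J, ∀ t ∈ J, ¬ IsConflict FDs s t

/-- `opt FDs I` is the minimum of `dist(J,I) = |I| - |J|` over all consistent subsets `J ⊆ I`. -/
noncomputable def opt {α V : Type*} (FDs : Finset (Finset α × Finset α))
    (I : Finset (α → V)) : ℕ :=
  sInf {d : ℕ | ∃ J ⊆ I, Consistent FDs J ∧ d = I.card - J.card}

/-- A monotone E3CNF formula with `n` variables and `m` clauses: each clause has exactly
three literals over pairwise distinct variables and is monotone, i.e. all its literals have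
the same polarity `pol i` (`true` = all positive, `false` = all negative). -/
structure MonotoneE3CNF (n m : ℕ) where
  lit : Fin m → Fin 3 → Fin n
  pol : Fin m → Bool
  distinct : ∀ i, Function.Injective (lit i)

/-- The number of clauses satisfied by assignment `τ`. -/
def MonotoneE3CNF.numSat {n m : ℕ} (φ : MonotoneE3CNF n m) (τ : Fin n → Bool) : ℕ :=
  (Finset.univ.filter fun i : Fin m => ∃ k, τ (φ.lit i k) = φ.pol i).card

/-- `#τ_max(φ)`: the maximum number of simultaneously satisfiable clauses. -/
def MonotoneE3CNF.maxSat {n m : ℕ} (φ : MonotoneE3CNF n m) : ℕ :=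
  Finset.univ.sup fun τ : Fin n → Bool => φ.numSat τ

/-- Values used in the instance `I_φ`: clause indices `i`, variable indices `j`,
and for each variable `j` two constants `j⁺ = (j, true)` and `j⁻ = (j, false)`;
all pairwise distinct. -/
abbrev Val1 (n m : ℕ) := Sum (Fin m) (Sum (Fin n) (Fin n × Bool))

/-- The tuple built for the `k`-th literal of clause `i`: `(i, j⁺, j)` if the variable
`j = lit i k` occurs positively, `(i, j⁻, j)` if it occurs negatively. -/
def tuple1 {n m : ℕ} (φ : MonotoneE3CNF n m) (i : Fin m) (k : Fin 3) : Fin 3 → Val1 n m :=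
  ![Sum.inl i, Sum.inr (Sum.inr (φ.lit i k, φ.pol i)), Sum.inr (Sum.inl (φ.lit i k))]

/-- The instance `I_φ` over attributes `A = 0`, `B = 1`, `C = 2`. -/
def Iphi1 {n m : ℕ} (φ : MonotoneE3CNF n m) : Finset (Fin 3 → Val1 n m) :=
  Finset.univ.image fun p : Fin m × Fin 3 => tuple1 φ p.1 p.2

/-- The FD set `{A → B, C → B}`. -/
def Sigma1 : Finset (Finset (Fin 3) × Finset (Fin 3)) := {({0}, {1}), ({2}, {1})}

/-!
Two tuples of the same clause agree on `A` and differ on `B`, and the tuples `(i, j⁺, j)`,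
`(i', j⁻, j)` agree on `C` and differ on `B`. So a consistent `J ⊆ I_φ` keeps at most one
literal occurrence per clause and never uses a variable in both polarities. Making true the
variables it uses positively satisfies every clause it meets, whence `|J| ≤ #τ_max(φ)`;
conversely, one true literal from each clause satisfied by an optimal `τ` gives a consistent
`J` of size `#τ_max(φ)`.
-/

theorem opt_eq_card_sub {α V : Type*} {FDs : Finset (Finset α × Finset α)}
    {I : Finset (α → V)} {k : ℕ} (hex : ∃ J ⊆ I, Consistent FDs J ∧ J.card = k)
    (hle : ∀ J ⊆ I, Consistent FDs J → J.card ≤ k) :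
    opt FDs I = I.card - k := by
  obtain ⟨J, hJI, hJ, rfl⟩ := hex
  refine le_antisymm (Nat.sInf_le ⟨J, hJI, hJ, rfl⟩) (le_csInf ⟨_, J, hJI, hJ, rfl⟩ ?_)
  rintro _ ⟨J', hJ'I, hJ', rfl⟩
  exact Nat.sub_le_sub_left (hle J' hJ'I hJ') _

theorem isConflict_sigma1 {V : Type*} (s t : Fin 3 → V) :
    IsConflict Sigma1 s t ↔ (s 0 = t 0 ∨ s 2 = t 2) ∧ s 1 ≠ t 1 := by
  simp only [IsConflict, Sigma1, Finset.mem_insert, Finset.mem_singleton, IsPhiConflict,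
    exists_eq_or_imp, forall_eq, exists_eq_left, ↓existsAndEq, true_and]
  tauto

namespace MonotoneE3CNF

variable {n m : ℕ} (φ : MonotoneE3CNF n m)

theorem tuple1_injective : Function.Injective fun p : Fin m × Fin 3 => tuple1 φ p.1 p.2 := by
  rintro ⟨i, k⟩ ⟨i', k'⟩ h
  obtain rfl : i = i' := by simpa [tuple1] using congrFun h 0
  have : φ.lit i k = φ.lit i k' := by simpa [tuple1] using congrFun h 2
  rw [φ.distinct i this]

theorem card_Iphi1 : (Iphi1 φ).card = 3 * m := by
  rw [Iphi1, Finset.card_image_of_injective _ φ.tuple1_injective]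
  simp [mul_comm]

theorem isConflict_tuple1_iff {i i' : Fin m} {k k' : Fin 3} :
    IsConflict Sigma1 (tuple1 φ i k) (tuple1 φ i' k') ↔
      (i = i' ∨ φ.lit i k = φ.lit i' k') ∧ (φ.lit i k, φ.pol i) ≠ (φ.lit i' k', φ.pol i') := by
  simp [isConflict_sigma1, tuple1]

def IsCoherent (S : Finset (Fin m × Fin 3)) : Prop :=
  ∀ p ∈ S, ∀ q ∈ S, (p.1 = q.1 → p = q) ∧ (φ.lit p.1 p.2 = φ.lit q.1 q.2 → φ.pol p.1 = φ.pol q.1)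

theorem consistent_image_tuple1_iff (S : Finset (Fin m × Fin 3)) :
    Consistent Sigma1 (S.image fun p => tuple1 φ p.1 p.2) ↔ φ.IsCoherent S := by
  simp only [Consistent, IsCoherent, Finset.forall_mem_image, isConflict_tuple1_iff]
  refine forall₂_congr fun p _ => forall₂_congr fun q _ => ?_
  constructor
  · intro h
    refine ⟨fun h1 => ?_, fun hl => ?_⟩
    · by_contra hpq
      exact h ⟨Or.inl h1, fun he => hpq (Prod.ext h1 (φ.distinct _ (h1 ▸ (Prod.ext_iff.1 he).1)))⟩
    · by_contra hp
      exact h ⟨Or.inr hl, fun he => hp (Prod.ext_iff.1 he).2⟩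
  · rintro ⟨h1, h2⟩ ⟨hi | hl, hne⟩
    · obtain rfl := h1 hi
      exact hne rfl
    · exact hne (Prod.ext hl (h2 hl))

def assignmentOf (S : Finset (Fin m × Fin 3)) (j : Fin n) : Bool :=
  decide (∃ p ∈ S, φ.lit p.1 p.2 = j ∧ φ.pol p.1 = true)

theorem card_le_numSat_assignmentOf {S : Finset (Fin m × Fin 3)} (hS : φ.IsCoherent S) :
    S.card ≤ φ.numSat (φ.assignmentOf S) := by
  refine Finset.card_le_card_of_injOn Prod.fst (fun p hp => ?_)
    (fun p hp q hq h => ((hS p hp q hq).1 h))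
  simp only [Finset.coe_filter, Finset.mem_univ, true_and, Set.mem_ofPred_eq]
  refine ⟨p.2, ?_⟩
  cases hpol : φ.pol p.1
  · simp only [assignmentOf, decide_eq_false_iff_not, not_exists, not_and]
    intro q hq hl hq'
    simpa [hpol, hq'] using (hS q hq p (Finset.mem_coe.1 hp)).2 hl
  · simpa [assignmentOf] using ⟨p.1, p.2, hp, rfl, hpol⟩

theorem exists_isCoherent_card_eq_numSat (τ : Fin n → Bool) :
    ∃ S, φ.IsCoherent S ∧ S.card = φ.numSat τ := by
  classical
  choose! k hk using fun (i : Fin m) (h : ∃ k, τ (φ.lit i k) = φ.pol i) => h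
  refine ⟨(Finset.univ.filter fun i => ∃ k, τ (φ.lit i k) = φ.pol i).image fun i => (i, k i),
    ?_, Finset.card_image_of_injective _ fun i j h => congrArg Prod.fst h⟩
  simp only [IsCoherent, Finset.forall_mem_image, Finset.mem_filter, Finset.mem_univ, true_and]
  intro i hi j hj
  refine ⟨fun h => by rw [h], fun hl => ?_⟩
  rw [← hk i hi, ← hk j hj, hl]

theorem exists_consistent_card_eq_maxSat :
    ∃ J ⊆ Iphi1 φ, Consistent Sigma1 J ∧ J.card = φ.maxSat := by
  obtain ⟨τ, -, hτ⟩ := Finset.exists_mem_eq_sup _ Finset.univ_nonempty φ.numSat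
  obtain ⟨S, hS, hcard⟩ := φ.exists_isCoherent_card_eq_numSat τ
  refine ⟨_, Finset.image_subset_image (Finset.subset_univ S),
    (φ.consistent_image_tuple1_iff S).2 hS, ?_⟩
  rw [Finset.card_image_of_injective _ φ.tuple1_injective, hcard, maxSat, hτ]

theorem card_le_maxSat_of_consistent {J : Finset (Fin 3 → Val1 n m)} (hJ : J ⊆ Iphi1 φ)
    (hc : Consistent Sigma1 J) : J.card ≤ φ.maxSat := by
  obtain ⟨S, -, rfl⟩ := Finset.subset_image_iff.1 hJ
  rw [Finset.card_image_of_injective _ φ.tuple1_injective]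
  exact (φ.card_le_numSat_assignmentOf ((φ.consistent_image_tuple1_iff S).1 hc)).trans
    (Finset.le_sup (Finset.mem_univ _))

end MonotoneE3CNF

/-- For every monotone E3CNF formula `φ` with `n` variables and `m` clauses,
`opt(I_φ) = 3m − #τ_max(φ)` with respect to `{A → B, C → B}`. -/
theorem stmt1 {n m : ℕ} (φ : MonotoneE3CNF n m) :
    opt Sigma1 (Iphi1 φ) = 3 * m - φ.maxSat := by
  rw [opt_eq_card_sub φ.exists_consistent_card_eq_maxSat
    fun _ => φ.card_le_maxSat_of_consistent, φ.card_Iphi1]
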